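/- Let G=(L,E) be a finite graph of dimension d (|S_r(i)| ≤ c·r^{d-1}), I ⊆ L with surface area s(I), and suppose nonneg weights w(i,j) satisfy w(i,j) ≤ A·e^{-dist(i,j)/ξ} with A≥0, ξ>0. Then ∑_{i∈I, j∈L∖I} w(i,j) ≤ A·c²·Li_{1-2d}(e^{-1/ξ})·s(I), where Li_{1-2d}(x) = ∑_{r≥1} r^{2d-1} x^r. -/

import Mathlib

/-- The polylogarithm `Li_{1-2d}(x) = ∑_{r ≥ 1} r^{2d-1} x^r` (here with exponent `s`,
`Li_{1-s... }`): `polyLog s x = ∑_{r≥1} r^{s-1} x^r`. -/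
noncomputable def polyLog (s x : ℝ) : ℝ := ∑' r : ℕ, ((r : ℝ) + 1) ^ (s - 1) * x ^ (r + 1)

open Finset SimpleGraph

lemma crossing {L : Type*} (G : SimpleGraph L) (hG : G.Connected)
    (I : Finset L) [DecidableEq L] :
    ∀ r : ℕ, ∀ i j : L, i ∈ I → j ∉ I → G.dist i j = r →
      ∃ a b : L, ∃ m n : ℕ, a ∈ I ∧ b ∉ I ∧ G.dist b a = 1 ∧
        G.dist i a = m ∧ G.dist i b = m + 1 ∧ G.dist b j = n ∧ G.dist a j = n + 1 ∧
        m + n + 1 = r := by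
  intro r
  induction r using Nat.strong_induction_on with
  | _ r ih =>
    intro i j hi hj hr
    have hij : i ≠ j := fun h => hj (h ▸ hi)
    have hrpos : 0 < r := hr ▸ hG.pos_dist_of_ne hij
    obtain ⟨p, hp⟩ := SimpleGraph.exists_walk_of_dist_ne_zero (by omega : G.dist i j ≠ 0)
    rw [hr] at hp
    cases p with
    | nil => simp at hp; omega
    | cons hadj q =>
      rename_i i₁
      have hq : q.length + 1 = r := by simpa using hp
      have hd1 : G.dist i i₁ = 1 := SimpleGraph.dist_eq_one_iff_adj.mpr hadj
      have hdq : G.dist i₁ j = r - 1 := by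
        have h1 : G.dist i₁ j ≤ r - 1 := by
          have := SimpleGraph.dist_le q
          omega
        have h2 : G.dist i j ≤ G.dist i i₁ + G.dist i₁ j := hG.dist_triangle
        omega
      by_cases hi₁ : i₁ ∈ I
      · -- recurse
        have hne0 : r - 1 ≠ 0 := by
          intro h0
          have : i₁ = j := by
            have := hG.dist_eq_zero_iff.mp (by omega : G.dist i₁ j = 0)
            exact this
          exact hj (this ▸ hi₁)
        obtain ⟨a, b, m, n, ha, hb, hba, h1, h2, h3, h4, h5⟩ :=
          ih (r-1) (by omega) i₁ j hi₁ hj hdq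
        refine ⟨a, b, m+1, n, ha, hb, hba, ?_, ?_, h3, h4, by omega⟩
        · -- dist i a = m+1
          have hub : G.dist i a ≤ m + 1 := by
            have := hG.dist_triangle (u := i) (v := i₁) (w := a)
            omega
        -- lower bound
          have hlb : r ≤ G.dist i a + G.dist a j := hr ▸ hG.dist_triangle
          omega
        · -- dist i b = m+2
          have hub : G.dist i b ≤ m + 2 := by
            have := hG.dist_triangle (u := i) (v := i₁) (w := b)
            omega
          have hlb : r ≤ G.dist i b + G.dist b j := hr ▸ hG.dist_triangle
          omega
      · refine ⟨i, i₁, 0, r - 1, hi, hi₁, ?_, by simp, by simpa using hd1, hdq, by omega, by omega⟩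
        rw [SimpleGraph.dist_comm]; exact hd1

lemma harmonic_bound (r : ℕ) (hr : 1 ≤ r) :
    ∑ t ∈ Finset.Ico ((r+1)/2) r, (if 2*t = r then (1:ℝ)/r else 1/t) ≤ (r - 1)/r := by
  have hterm : ∀ t ∈ Finset.Ico ((r+1)/2) r, (if 2*t = r then (1:ℝ)/r else 1/t)
      ≤ (if 2*t = r then (1:ℝ)/r else 1/((r+1)/2 : ℕ)) := by
    intro t ht
    rw [Finset.mem_Ico] at ht
    split
    · exact le_rfl
    · have h1 : (0:ℝ) < ((r+1)/2 : ℕ) := by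
        have : 1 ≤ (r+1)/2 := by omega
        exact_mod_cast this
      apply div_le_div_of_nonneg_left (by norm_num) h1
      exact_mod_cast ht.1
  calc ∑ t ∈ Finset.Ico ((r+1)/2) r, (if 2*t = r then (1:ℝ)/r else 1/t)
      ≤ ∑ t ∈ Finset.Ico ((r+1)/2) r, (if 2*t = r then (1:ℝ)/r else 1/((r+1)/2 : ℕ)) :=
        Finset.sum_le_sum hterm
    _ ≤ (r - 1)/r := by
        rcases Nat.even_or_odd r with ⟨k, hk⟩ | ⟨k, hk⟩
        · -- r = 2k even, fixed point at t = k
          have hk1 : 1 ≤ k := by omega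
          have hsplit : Finset.Ico ((r+1)/2) r = insert k (Finset.Ico (k+1) r) := by
            ext t; simp only [Finset.mem_Ico, Finset.mem_insert]; omega
          rw [hsplit, Finset.sum_insert (by simp), if_pos (by omega : 2*k = r)]
          have : ∀ t ∈ Finset.Ico (k+1) r, (if 2*t = r then (1:ℝ)/r else 1/((r+1)/2 : ℕ))
              = 1/((r+1)/2 : ℕ) := by
            intro t ht; rw [Finset.mem_Ico] at ht; rw [if_neg (by omega)]
          rw [Finset.sum_congr rfl this, Finset.sum_const, Nat.card_Ico]
          have h2 : (r+1)/2 = k := by omega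
          have h3 : r - (k+1) = k - 1 := by omega
          rw [h2, h3, nsmul_eq_mul]
          have hkc : ((k - 1 : ℕ) : ℝ) = (k:ℝ) - 1 := by
            rw [Nat.cast_sub hk1]; norm_num
          rw [hkc, hk]
          have hkpos : (0:ℝ) < k := by exact_mod_cast hk1
          push_cast
          rw [mul_one_div, div_add_div _ _ (by positivity) (by positivity),
            div_le_div_iff₀ (by positivity) (by positivity)]
          nlinarith [hkpos]
        · -- r = 2k+1 odd, no fixed point
          have : ∀ t ∈ Finset.Ico ((r+1)/2) r, (if 2*t = r then (1:ℝ)/r else 1/((r+1)/2 : ℕ))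
              = 1/((r+1)/2 : ℕ) := by
            intro t ht; rw [if_neg (by omega)]
          rw [Finset.sum_congr rfl this, Finset.sum_const, Nat.card_Ico, nsmul_eq_mul]
          have h2 : (r+1)/2 = k+1 := by omega
          have h3 : r - (k+1) = k := by omega
          rw [h2, h3, hk]
          push_cast
          have hk0 : (0:ℝ) ≤ k := by positivity
          rw [mul_one_div, div_le_div_iff₀ (by positivity) (by positivity)]
          nlinarith [hk0]

lemma fiber_count {L : Type*} [Fintype L] [DecidableEq L]
    (G : SimpleGraph L) (hG : G.Connected) (c d : ℝ) (hc : 0 < c) (hd : 0 < d)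
    (hsphere : ∀ i : L, ∀ r : ℕ, 1 ≤ r →
      ((Finset.univ.filter fun l : L => G.dist i l = r).card : ℝ) ≤ c * (r : ℝ) ^ (d - 1))
    (I : Finset L) (a b : L) (ha : a ∈ I) (hb : b ∉ I)
    (P : Finset (L × L)) (r : ℕ) (hr : 1 ≤ r) (hne : P.Nonempty)
    (hP : ∀ p ∈ P, p.1 ∈ I ∧ p.2 ∉ I ∧ G.dist p.1 p.2 = r ∧
      G.dist p.1 b = G.dist p.1 a + 1 ∧ G.dist a p.2 = G.dist b p.2 + 1 ∧
      G.dist p.1 a + G.dist b p.2 + 1 = r) :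
    (P.card : ℝ) ≤ c^2 * (r:ℝ) ^ (2*d - 1) := by
  have hr0 : (0:ℝ) < r := by exact_mod_cast hr
  set X : ℝ := c * (r:ℝ) ^ (d - 1) with hX
  have hXnn : 0 ≤ X := by positivity
  -- X ≥ 1 via the witness pair
  have hX1 : (1:ℝ) ≤ X := by
    obtain ⟨p₀, hp₀⟩ := hne
    obtain ⟨_, _, hd0, _, _, _⟩ := hP p₀ hp₀
    have hmem : p₀.2 ∈ Finset.univ.filter fun l : L => G.dist p₀.1 l = r := by
      simp [hd0]
    have h1 : 1 ≤ (Finset.univ.filter fun l : L => G.dist p₀.1 l = r).card :=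
      Finset.card_pos.mpr ⟨p₀.2, hmem⟩
    calc (1:ℝ) ≤ ((Finset.univ.filter fun l : L => G.dist p₀.1 l = r).card : ℝ) := by
          exact_mod_cast h1
      _ ≤ X := hsphere p₀.1 r hr
  set Aset : ℕ → Finset L := fun m =>
    Finset.univ.filter fun i => i ∈ I ∧ G.dist i a = m ∧ G.dist i b = m+1 with hAset
  set Bset : ℕ → Finset L := fun t =>
    Finset.univ.filter fun j => j ∉ I ∧ G.dist b j = t ∧ G.dist a j = t+1 with hBset
  set f : ℕ → ℝ := fun m => ((P.filter fun p => G.dist p.1 a = m).card : ℝ) with hf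
  -- C1
  have C1 : ∀ m : ℕ, f m ≤ ((Aset m).card : ℝ) * X := by
    intro m
    set Q := P.filter fun p => G.dist p.1 a = m with hQ
    have hcard : Q.card = ∑ i ∈ Aset m, (Q.filter fun p => p.1 = i).card := by
      apply Finset.card_eq_sum_card_fiberwise
      intro p hp
      rw [hQ, Finset.mem_coe, Finset.mem_filter] at hp
      obtain ⟨hpP, hpm⟩ := hp
      obtain ⟨h1, h2, h3, h4, h5, h6⟩ := hP p hpP
      rw [hAset]
      simp only [Finset.mem_coe, Finset.mem_filter, Finset.mem_univ, true_and]
      exact ⟨h1, hpm, by omega⟩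
    have hfiber : ∀ i ∈ Aset m, ((Q.filter fun p => p.1 = i).card : ℝ) ≤ X := by
      intro i _
      have hsub : (Q.filter fun p => p.1 = i).card ≤
          (Finset.univ.filter fun l : L => G.dist i l = r).card := by
        apply Finset.card_le_card_of_injOn (fun p => p.2)
        · intro p hp
          rw [Finset.mem_coe, Finset.mem_filter] at hp ⊢
          obtain ⟨hpQ, hpi⟩ := hp
          rw [hQ, Finset.mem_filter] at hpQ
          obtain ⟨h1, _, h3, _⟩ := hP p hpQ.1
          exact ⟨Finset.mem_univ _, by rw [← hpi]; exact h3⟩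
        · intro p hp q hq hpq
          rw [Finset.mem_coe, Finset.mem_filter] at hp hq
          exact Prod.ext (hp.2.trans hq.2.symm) hpq
      calc ((Q.filter fun p => p.1 = i).card : ℝ)
          ≤ ((Finset.univ.filter fun l : L => G.dist i l = r).card : ℝ) := by exact_mod_cast hsub
        _ ≤ X := hsphere i r hr
    calc f m = ((Q.card : ℕ) : ℝ) := rfl
      _ = ∑ i ∈ Aset m, ((Q.filter fun p => p.1 = i).card : ℝ) := by
          rw [hcard]; push_cast; rfl
      _ ≤ ∑ i ∈ Aset m, X := Finset.sum_le_sum hfiber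
      _ = ((Aset m).card : ℝ) * X := by rw [Finset.sum_const, nsmul_eq_mul]
  -- C2
  have C2 : ∀ m : ℕ, f m ≤ ((Bset (r-1-m)).card : ℝ) * X := by
    intro m
    set Q := P.filter fun p => G.dist p.1 a = m with hQ
    have hcard : Q.card = ∑ j ∈ Bset (r-1-m), (Q.filter fun p => p.2 = j).card := by
      apply Finset.card_eq_sum_card_fiberwise
      intro p hp
      rw [hQ, Finset.mem_coe, Finset.mem_filter] at hp
      obtain ⟨hpP, hpm⟩ := hp
      obtain ⟨h1, h2, h3, h4, h5, h6⟩ := hP p hpP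
      rw [hBset]
      simp only [Finset.mem_coe, Finset.mem_filter, Finset.mem_univ, true_and]
      refine ⟨h2, by omega, by omega⟩
    have hfiber : ∀ j ∈ Bset (r-1-m), ((Q.filter fun p => p.2 = j).card : ℝ) ≤ X := by
      intro j _
      have hsub : (Q.filter fun p => p.2 = j).card ≤
          (Finset.univ.filter fun l : L => G.dist j l = r).card := by
        apply Finset.card_le_card_of_injOn (fun p => p.1)
        · intro p hp
          rw [Finset.mem_coe, Finset.mem_filter] at hp ⊢
          obtain ⟨hpQ, hpj⟩ := hp
          rw [hQ, Finset.mem_filter] at hpQ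
          obtain ⟨_, _, h3, _⟩ := hP p hpQ.1
          refine ⟨Finset.mem_univ _, ?_⟩
          rw [← hpj, SimpleGraph.dist_comm]; exact h3
        · intro p hp q hq hpq
          rw [Finset.mem_coe, Finset.mem_filter] at hp hq
          exact Prod.ext hpq (hp.2.trans hq.2.symm)
      calc ((Q.filter fun p => p.2 = j).card : ℝ)
          ≤ ((Finset.univ.filter fun l : L => G.dist j l = r).card : ℝ) := by exact_mod_cast hsub
        _ ≤ X := hsphere j r hr
    calc f m = ((Q.card : ℕ) : ℝ) := rfl
      _ = ∑ j ∈ Bset (r-1-m), ((Q.filter fun p => p.2 = j).card : ℝ) := by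
          rw [hcard]; push_cast; rfl
      _ ≤ ∑ j ∈ Bset (r-1-m), X := Finset.sum_le_sum hfiber
      _ = ((Bset (r-1-m)).card : ℝ) * X := by rw [Finset.sum_const, nsmul_eq_mul]
  -- C3 : level bound
  have C3 : ∀ t : ℕ, ((Aset (t+1)).card : ℝ) + ((Bset t).card : ℝ) ≤ c * ((t+1 : ℕ) : ℝ) ^ (d-1) := by
    intro t
    have hdisj : Disjoint (Aset (t+1)) (Bset t) := by
      rw [Finset.disjoint_left]
      intro u hu hv
      rw [hAset, Finset.mem_filter] at hu
      rw [hBset, Finset.mem_filter] at hv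
      exact hv.2.1 hu.2.1
    have hsub : Aset (t+1) ∪ Bset t ⊆ Finset.univ.filter fun l : L => G.dist a l = t+1 := by
      intro u hu
      rw [Finset.mem_union] at hu
      simp only [Finset.mem_filter, Finset.mem_univ, true_and]
      rcases hu with hu | hu
      · rw [hAset, Finset.mem_filter] at hu
        rw [SimpleGraph.dist_comm]; exact hu.2.2.1
      · rw [hBset, Finset.mem_filter] at hu
        exact hu.2.2.2
    have hcard : (Aset (t+1)).card + (Bset t).card ≤
        (Finset.univ.filter fun l : L => G.dist a l = t+1).card := by
      rw [← Finset.card_union_of_disjoint hdisj]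
      exact Finset.card_le_card hsub
    calc ((Aset (t+1)).card : ℝ) + ((Bset t).card : ℝ)
        ≤ ((Finset.univ.filter fun l : L => G.dist a l = t+1).card : ℝ) := by exact_mod_cast hcard
      _ ≤ c * ((t+1 : ℕ) : ℝ) ^ (d-1) := hsphere a (t+1) (by omega)
  -- C4
  have C4 : ((Aset 0).card : ℝ) ≤ 1 := by
    have : Aset 0 ⊆ {a} := by
      intro i hi
      rw [hAset, Finset.mem_filter] at hi
      rw [Finset.mem_singleton]
      exact hG.dist_eq_zero_iff.mp hi.2.2.1
    have := Finset.card_le_card this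
    simp only [Finset.card_singleton] at this
    exact_mod_cast this
  -- assembly
  have hfnn : ∀ m, 0 ≤ f m := fun m => Nat.cast_nonneg _
  have hsum : (P.card : ℝ) = ∑ m ∈ Finset.range r, f m := by
    have h0 : P.card = ∑ m ∈ Finset.range r, (P.filter fun p => G.dist p.1 a = m).card := by
      apply Finset.card_eq_sum_card_fiberwise
      intro p hp
      obtain ⟨_, _, _, _, _, h6⟩ := hP p hp
      simp only [Finset.coe_range, Set.mem_Iio]; omega
    rw [h0]; push_cast; rfl
  have hsplit : ∑ m ∈ Finset.range r, f m = f 0 + ∑ m ∈ Finset.Ico 1 r, f m := by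
    rw [Finset.range_eq_Ico, Finset.sum_eq_sum_Ico_succ_bot (by omega : 0 < r)]
  have hrda : (r:ℝ) ^ (d-1) = (r:ℝ)^d / r := by
    rw [Real.rpow_sub hr0, Real.rpow_one]
  have hmain : ∑ m ∈ Finset.Ico 1 r, f m ≤
      ∑ t ∈ Finset.Ico ((r+1)/2) r,
        (X * (c * (r:ℝ)^d * (if 2*t = r then 1/(r:ℝ) else 1/(t:ℝ)))) := by
    have hmaps : ∀ m ∈ Finset.Ico 1 r, max m (r - m) ∈ Finset.Ico ((r+1)/2) r := by
      intro m hm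
      rw [Finset.mem_Ico] at hm ⊢
      rcases max_choice m (r-m) with hch | hch <;>
        (have h1 := le_max_left m (r-m); have h2 := le_max_right m (r-m); omega)
    rw [← Finset.sum_fiberwise_of_maps_to hmaps f]
    apply Finset.sum_le_sum
    intro t ht
    rw [Finset.mem_Ico] at ht
    have ht1 : 1 ≤ t := by omega
    have htr : t < r := ht.2
    have ht0 : (0:ℝ) < t := by exact_mod_cast ht1
    have htd : ((t:ℕ):ℝ) ^ (d-1) = (t:ℝ)^d / t := by
      rw [Real.rpow_sub ht0, Real.rpow_one]
    have htdr : (t:ℝ)^d ≤ (r:ℝ)^d :=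
      Real.rpow_le_rpow (le_of_lt ht0) (by exact_mod_cast htr.le) hd.le
    by_cases h2t : 2*t = r
    · have hsub : (Finset.Ico 1 r).filter (fun m => max m (r-m) = t) ⊆ {t} := by
        intro m hm
        rw [Finset.mem_filter, Finset.mem_Ico] at hm
        rw [Finset.mem_singleton]
        rcases max_choice m (r-m) with hch | hch <;> omega
      have hinner : ∑ m ∈ (Finset.Ico 1 r).filter (fun m => max m (r-m) = t), f m ≤ f t :=
        le_of_le_of_eq
          (Finset.sum_le_sum_of_subset_of_nonneg hsub (fun m _ _ => hfnn m))
          (Finset.sum_singleton _ _)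
      have hft : 2 * f t ≤ (c * ((t:ℕ):ℝ)^(d-1)) * X := by
        have hB := C2 t
        have heq : r - 1 - t = t - 1 := by omega
        rw [heq] at hB
        have hA := C1 t
        have hC := C3 (t-1)
        have heq2 : t - 1 + 1 = t := by omega
        rw [heq2] at hC
        nlinarith [hXnn]
      have hμ : (c * ((t:ℕ):ℝ)^(d-1)) / 2 ≤ c * (r:ℝ)^d * (1/(r:ℝ)) := by
        have h2tr : (r:ℝ) = 2*t := by exact_mod_cast h2t.symm
        have hpow : ((t:ℝ))^d ≤ ((r:ℝ))^d :=
          Real.rpow_le_rpow (le_of_lt ht0) (by exact_mod_cast htr.le) hd.le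
        calc (c * ((t:ℕ):ℝ)^(d-1)) / 2 = (c * ((t:ℝ)^d/t))/2 := by rw [htd]
          _ = (c * (t:ℝ)^d) / (r:ℝ) := by rw [h2tr]; ring
          _ ≤ (c * (r:ℝ)^d) / (r:ℝ) :=
              (div_le_div_iff_of_pos_right hr0).mpr (mul_le_mul_of_nonneg_left hpow hc.le)
          _ = c * (r:ℝ)^d * (1/(r:ℝ)) := by ring
      rw [if_pos h2t]
      calc ∑ m ∈ (Finset.Ico 1 r).filter (fun m => max m (r-m) = t), f m
          ≤ f t := hinner
        _ ≤ (c * ((t:ℕ):ℝ)^(d-1)) * X / 2 := by linarith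
        _ = ((c * ((t:ℕ):ℝ)^(d-1)) / 2) * X := by ring
        _ ≤ (c * (r:ℝ)^d * (1/(r:ℝ))) * X := by
            apply mul_le_mul_of_nonneg_right hμ hXnn
        _ = X * (c * (r:ℝ)^d * (1/(r:ℝ))) := by ring
    · have hsub : (Finset.Ico 1 r).filter (fun m => max m (r-m) = t) ⊆ {t, r-t} := by
        intro m hm
        rw [Finset.mem_filter, Finset.mem_Ico] at hm
        rw [Finset.mem_insert, Finset.mem_singleton]
        rcases max_choice m (r-m) with hch | hch <;> omega
      have hne' : t ≠ r - t := by omega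
      have hinner : ∑ m ∈ (Finset.Ico 1 r).filter (fun m => max m (r-m) = t), f m
          ≤ f t + f (r-t) := by
        calc _ ≤ ∑ m ∈ ({t, r-t} : Finset ℕ), f m :=
              Finset.sum_le_sum_of_subset_of_nonneg hsub (fun m _ _ => hfnn m)
          _ = f t + f (r-t) := Finset.sum_pair hne'
      have hA := C1 t
      have hB := C2 (r-t)
      have heq : r - 1 - (r-t) = t - 1 := by omega
      rw [heq] at hB
      have hC := C3 (t-1)
      have heq2 : t - 1 + 1 = t := by omega
      rw [heq2] at hC
      have hμ : c * ((t:ℕ):ℝ)^(d-1) ≤ c * (r:ℝ)^d * (1/(t:ℝ)) := by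
        calc c * ((t:ℕ):ℝ)^(d-1) = (c * (t:ℝ)^d) / t := by rw [htd]; ring
          _ ≤ (c * (r:ℝ)^d) / t :=
              (div_le_div_iff_of_pos_right ht0).mpr (mul_le_mul_of_nonneg_left htdr hc.le)
          _ = c * (r:ℝ)^d * (1/(t:ℝ)) := by ring
      rw [if_neg h2t]
      calc ∑ m ∈ (Finset.Ico 1 r).filter (fun m => max m (r-m) = t), f m
          ≤ f t + f (r-t) := hinner
        _ ≤ (((Aset t).card : ℝ) + ((Bset (t-1)).card : ℝ)) * X := by
            rw [add_mul]; exact add_le_add hA hB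
        _ ≤ (c * ((t:ℕ):ℝ)^(d-1)) * X := mul_le_mul_of_nonneg_right hC hXnn
        _ ≤ (c * (r:ℝ)^d * (1/(t:ℝ))) * X := mul_le_mul_of_nonneg_right hμ hXnn
        _ = X * (c * (r:ℝ)^d * (1/(t:ℝ))) := by ring
  -- harmonic bound
  have hharm : ∑ t ∈ Finset.Ico ((r+1)/2) r,
      (X * (c * (r:ℝ)^d * (if 2*t = r then 1/(r:ℝ) else 1/(t:ℝ))))
      ≤ X * (c * (r:ℝ)^d) * (((r:ℝ) - 1)/r) := by
    have hfac : ∀ t ∈ Finset.Ico ((r+1)/2) r,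
        X * (c * (r:ℝ)^d * (if 2*t = r then 1/(r:ℝ) else 1/(t:ℝ)))
        = (X * (c * (r:ℝ)^d)) * (if 2*t = r then 1/(r:ℝ) else 1/(t:ℝ)) := by
      intro t _; ring
    rw [Finset.sum_congr rfl hfac, ← Finset.mul_sum]
    exact mul_le_mul_of_nonneg_left (harmonic_bound r hr) (by positivity)
  have hf0 : f 0 ≤ X * X := by
    calc f 0 ≤ ((Aset 0).card:ℝ) * X := C1 0
      _ ≤ 1 * X := mul_le_mul_of_nonneg_right C4 hXnn
      _ = X := one_mul X
      _ ≤ X * X := le_mul_of_one_le_left hXnn hX1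
  calc (P.card:ℝ) = f 0 + ∑ m ∈ Finset.Ico 1 r, f m := by rw [hsum, hsplit]
    _ ≤ X*X + X * (c*(r:ℝ)^d) * (((r:ℝ)-1)/r) := add_le_add hf0 (hmain.trans hharm)
    _ = X * (c * (r:ℝ)^d) * (1/(r:ℝ)) + X * (c*(r:ℝ)^d) * (((r:ℝ)-1)/r) := by
        have hXX : X = c * (r:ℝ)^d * (1/(r:ℝ)) := by rw [hX, hrda]; ring
        congr 1
        calc X * X = X * (c * (r:ℝ)^d * (1/(r:ℝ))) := by rw [← hXX]
          _ = X * (c * (r:ℝ)^d) * (1/(r:ℝ)) := by ring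
    _ = X * (c * (r:ℝ)^d) * (1/(r:ℝ) + ((r:ℝ)-1)/r) := by ring
    _ = X * (c * (r:ℝ)^d) := by
        have h1 : 1/(r:ℝ) + ((r:ℝ)-1)/r = 1 := by field_simp; ring
        rw [h1, mul_one]
    _ = c^2 * ((r:ℝ)^(d-1) * (r:ℝ)^d) := by rw [hX]; ring
    _ = c^2 * (r:ℝ)^(2*d-1) := by
        rw [← Real.rpow_add hr0]
        congr 1
        ring

/-- On a finite connected graph of dimension `d` (`|S_r(i)| ≤ c r^{d-1}`), for
`I ⊆ L` with surface area `s(I)` and nonnegative weights `w i j ≤ A e^{-dist(i,j)/ξ}`,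
`∑_{i∈I, j∉I} w i j ≤ A c² Li_{1-2d}(e^{-1/ξ}) s(I)`. -/
theorem weighted_boundary_area_bound {L : Type*} [Fintype L] [DecidableEq L]
    (G : SimpleGraph L) (hG : G.Connected)
    (c d : ℝ) (hc : 0 < c) (hd : 0 < d)
    (hsphere : ∀ i : L, ∀ r : ℕ, 1 ≤ r →
      ((Finset.univ.filter fun l : L => G.dist i l = r).card : ℝ) ≤ c * (r : ℝ) ^ (d - 1))
    (I : Finset L) (w : L → L → ℝ) (A ξ : ℝ) (hA : 0 ≤ A) (hξ : 0 < ξ)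
    (hw0 : ∀ i j : L, 0 ≤ w i j)
    (hw : ∀ i j : L, w i j ≤ A * Real.exp (-(G.dist i j : ℝ) / ξ)) :
    ∑ i ∈ I, ∑ j ∈ Iᶜ, w i j ≤
      A * c ^ 2 * polyLog (2 * d) (Real.exp (-1 / ξ)) *
        (((Iᶜ ×ˢ I).filter fun p : L × L => G.dist p.1 p.2 = 1).card : ℝ) := by
  classical
  set x := Real.exp (-1/ξ) with hxdef
  have hx0 : 0 < x := Real.exp_pos _
  have hx1 : x < 1 := by
    rw [hxdef]
    apply Real.exp_lt_one_iff.mpr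
    exact div_neg_of_neg_of_pos (by norm_num) hξ
  have hpl_nn : 0 ≤ polyLog (2*d) x := tsum_nonneg (fun k => by positivity)
  have hRHS_nn : 0 ≤ A * c ^ 2 * polyLog (2 * d) x *
      (((Iᶜ ×ˢ I).filter fun p : L × L => G.dist p.1 p.2 = 1).card : ℝ) := by
    apply mul_nonneg _ (Nat.cast_nonneg _)
    exact mul_nonneg (mul_nonneg hA (by positivity)) hpl_nn
  by_cases hI : I.Nonempty
  swap
  · rw [Finset.not_nonempty_iff_eq_empty] at hI
    rw [hI]
    simpa using hRHS_nn
  by_cases hIc : Iᶜ.Nonempty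
  swap
  · rw [Finset.not_nonempty_iff_eq_empty] at hIc
    rw [hIc]
    simpa using hRHS_nn
  obtain ⟨i₀, hi₀⟩ := hI
  set Bdry := (Iᶜ ×ˢ I).filter (fun p : L × L => G.dist p.1 p.2 = 1) with hBdry
  have key : ∀ p : L × L, p ∈ I ×ˢ Iᶜ → ∃ e : L × L, e ∈ Bdry ∧
      G.dist p.1 e.1 = G.dist p.1 e.2 + 1 ∧ G.dist e.2 p.2 = G.dist e.1 p.2 + 1 ∧
      G.dist p.1 e.2 + G.dist e.1 p.2 + 1 = G.dist p.1 p.2 := by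
    intro p hp
    rw [Finset.mem_product, Finset.mem_compl] at hp
    obtain ⟨a, b, m, n, ha, hb, hba, h1, h2, h3, h4, h5⟩ :=
      crossing G hG I (G.dist p.1 p.2) p.1 p.2 hp.1 hp.2 rfl
    refine ⟨(b, a), ?_, ?_, ?_, ?_⟩
    · rw [hBdry, Finset.mem_filter, Finset.mem_product, Finset.mem_compl]
      exact ⟨⟨hb, ha⟩, hba⟩
    · simp only []
      omega
    · simp only []
      omega
    · simp only []
      omega
  set Ψ : L × L → L × L := fun p => if h : p ∈ I ×ˢ Iᶜ then (key p h).choose else (i₀, i₀)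
    with hΨ
  have Ψspec : ∀ p : L × L, ∀ h : p ∈ I ×ˢ Iᶜ, Ψ p ∈ Bdry ∧
      G.dist p.1 (Ψ p).1 = G.dist p.1 (Ψ p).2 + 1 ∧
      G.dist (Ψ p).2 p.2 = G.dist (Ψ p).1 p.2 + 1 ∧
      G.dist p.1 (Ψ p).2 + G.dist (Ψ p).1 p.2 + 1 = G.dist p.1 p.2 := by
    intro p h
    rw [hΨ]
    simp only [dif_pos h]
    exact (key p h).choose_spec
  -- Step 1
  have step1 : ∑ i ∈ I, ∑ j ∈ Iᶜ, w i j ≤ A * ∑ p ∈ I ×ˢ Iᶜ, x ^ (G.dist p.1 p.2) := by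
    rw [← Finset.sum_product', Finset.mul_sum]
    apply Finset.sum_le_sum
    intro p _
    have hexp : Real.exp (-(G.dist p.1 p.2 : ℝ)/ξ) = x ^ (G.dist p.1 p.2) := by
      rw [hxdef, ← Real.exp_nat_mul]
      congr 1
      ring
    calc w p.1 p.2 ≤ A * Real.exp (-(G.dist p.1 p.2:ℝ)/ξ) := hw _ _
      _ = A * x ^ (G.dist p.1 p.2) := by rw [hexp]
  -- Step 2: fiber over boundary
  have step2 : ∑ p ∈ I ×ˢ Iᶜ, x ^ (G.dist p.1 p.2)
      = ∑ e ∈ Bdry, ∑ p ∈ (I ×ˢ Iᶜ).filter (fun p => Ψ p = e), x ^ (G.dist p.1 p.2) :=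
    (Finset.sum_fiberwise_of_maps_to (fun p hp => (Ψspec p hp).1) _).symm
  -- Step 3
  have step3 : ∀ e ∈ Bdry, ∑ p ∈ (I ×ˢ Iᶜ).filter (fun p => Ψ p = e), x ^ (G.dist p.1 p.2)
      ≤ c^2 * polyLog (2*d) x := by
    intro e he
    rw [hBdry, Finset.mem_filter, Finset.mem_product, Finset.mem_compl] at he
    obtain ⟨⟨hb, ha⟩, hba⟩ := he
    set F := (I ×ˢ Iᶜ).filter (fun p => Ψ p = e) with hF
    set S := F.image (fun p => G.dist p.1 p.2) with hS
    have hS1 : ∀ r ∈ S, 1 ≤ r := by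
      intro r hrS
      obtain ⟨p₀, hp₀F, hp₀r⟩ := Finset.mem_image.mp hrS
      rw [hF, Finset.mem_filter, Finset.mem_product, Finset.mem_compl] at hp₀F
      by_contra h0
      have hr0 : G.dist p₀.1 p₀.2 = 0 := by omega
      have := hG.dist_eq_zero_iff.mp hr0
      exact hp₀F.1.2 (this ▸ hp₀F.1.1)
    have hmaps : ∀ p ∈ F, G.dist p.1 p.2 ∈ S := fun p hp => Finset.mem_image_of_mem _ hp
    rw [← Finset.sum_fiberwise_of_maps_to hmaps]
    have hbound : ∀ r ∈ S, ∑ p ∈ F.filter (fun p => G.dist p.1 p.2 = r), x ^ (G.dist p.1 p.2)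
        ≤ (c^2 * (r:ℝ)^(2*d-1)) * x ^ r := by
      intro r hrS
      obtain ⟨p₀, hp₀F, hp₀r⟩ := Finset.mem_image.mp hrS
      have hr1 : 1 ≤ r := hS1 r hrS
      have hsum_eq : ∑ p ∈ F.filter (fun p => G.dist p.1 p.2 = r), x ^ (G.dist p.1 p.2)
          = ((F.filter (fun p => G.dist p.1 p.2 = r)).card : ℝ) * x ^ r := by
        rw [Finset.sum_congr rfl (fun p hp => by rw [(Finset.mem_filter.mp hp).2]),
          Finset.sum_const, nsmul_eq_mul]
      rw [hsum_eq]
      apply mul_le_mul_of_nonneg_right _ (pow_nonneg hx0.le r)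
      apply fiber_count G hG c d hc hd hsphere I e.2 e.1 ha hb _ r hr1
        ⟨p₀, Finset.mem_filter.mpr ⟨hp₀F, hp₀r⟩⟩
      intro p hp
      rw [Finset.mem_filter] at hp
      obtain ⟨hpF, hpr⟩ := hp
      rw [hF, Finset.mem_filter] at hpF
      obtain ⟨hpprod, hpΨ⟩ := hpF
      have hsp := Ψspec p hpprod
      rw [hpΨ] at hsp
      rw [Finset.mem_product, Finset.mem_compl] at hpprod
      refine ⟨hpprod.1, hpprod.2, hpr, hsp.2.1, hsp.2.2.1, ?_⟩
      rw [← hpr]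
      exact hsp.2.2.2
    calc ∑ r ∈ S, ∑ p ∈ F.filter (fun p => G.dist p.1 p.2 = r), x ^ (G.dist p.1 p.2)
        ≤ ∑ r ∈ S, (c^2 * (r:ℝ)^(2*d-1)) * x^r := Finset.sum_le_sum hbound
      _ = c^2 * ∑ r ∈ S, (r:ℝ)^(2*d-1) * x^r := by
          rw [Finset.mul_sum]
          exact Finset.sum_congr rfl (fun r _ => by ring)
      _ ≤ c^2 * polyLog (2*d) x := by
          apply mul_le_mul_of_nonneg_left _ (by positivity)
          -- partial sum vs tsum
          have hsummable : Summable (fun k : ℕ => ((k:ℝ)+1)^(2*d-1) * x^(k+1)) := by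
            set M := Nat.ceil (2*d) with hM
            have hsum0 : Summable (fun n : ℕ => ((n:ℝ))^M * x^n) :=
              summable_pow_mul_geometric_of_norm_lt_one M
                (by rwa [Real.norm_eq_abs, abs_of_pos hx0])
            have hsum1 : Summable (fun n : ℕ => (((n+1):ℝ))^M * x^(n+1)) := by
              have := (summable_nat_add_iff (f := fun n : ℕ => ((n:ℝ))^M * x^n) 1).mpr hsum0
              simpa using this
            apply Summable.of_nonneg_of_le (fun k => by positivity) _ hsum1
            intro k
            have h1 : ((k:ℝ)+1)^(2*d-1) ≤ ((k:ℝ)+1)^((M:ℕ):ℝ) := by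
              apply Real.rpow_le_rpow_of_exponent_le (by linarith [Nat.cast_nonneg (α := ℝ) k])
              calc 2*d - 1 ≤ 2*d := by linarith
                _ ≤ ((M:ℕ):ℝ) := Nat.le_ceil (2*d)
            have h2 : ((k:ℝ)+1)^((M:ℕ):ℝ) = ((k:ℝ)+1)^(M:ℕ) := Real.rpow_natCast _ M
            apply mul_le_mul_of_nonneg_right _ (by positivity)
            rw [← h2]
            exact h1
          have hinj : ∀ r ∈ S, ∀ r' ∈ S, r - 1 = r' - 1 → r = r' := by
            intro r hr' r' hr'' h
            have h1 := hS1 r hr'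
            have h2 := hS1 r' hr''
            omega
          have hreindex : ∑ k ∈ S.image (fun r => r - 1), (((k:ℕ):ℝ)+1)^(2*d-1) * x^(k+1)
              = ∑ r ∈ S, (r:ℝ)^(2*d-1) * x^r := by
            rw [Finset.sum_image hinj]
            apply Finset.sum_congr rfl
            intro r hrS
            have hge := hS1 r hrS
            have h1 : r - 1 + 1 = r := by omega
            have h2 : ((r-1 : ℕ):ℝ) + 1 = (r:ℝ) := by
              rw [Nat.cast_sub hge]
              ring
            rw [h1, h2]
          rw [← hreindex]
          have hle := Summable.sum_le_tsum (S.image (fun r => r - 1))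
            (fun k _ => by positivity : ∀ k ∉ S.image (fun r => r - 1),
              0 ≤ (((k:ℕ):ℝ)+1)^(2*d-1) * x^(k+1)) hsummable
          exact hle
  calc ∑ i ∈ I, ∑ j ∈ Iᶜ, w i j
      ≤ A * ∑ p ∈ I ×ˢ Iᶜ, x ^ (G.dist p.1 p.2) := step1
    _ = A * ∑ e ∈ Bdry, ∑ p ∈ (I ×ˢ Iᶜ).filter (fun p => Ψ p = e), x ^ (G.dist p.1 p.2) := by
        rw [step2]
    _ ≤ A * ∑ e ∈ Bdry, (c^2 * polyLog (2*d) x) := by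
        apply mul_le_mul_of_nonneg_left (Finset.sum_le_sum step3) hA
    _ = A * ((Bdry.card : ℝ) * (c^2 * polyLog (2*d) x)) := by
        rw [Finset.sum_const, nsmul_eq_mul]
    _ = A * c ^ 2 * polyLog (2 * d) x * ((Bdry.card : ℝ)) := by ring
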